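/- Let Ha be a minimal tree projection of H1 w.r.t. H2. Then, for each hyperedge h ∈ edges(Ha) and each set C of nodes, C is an [h]-component of Ha if, and only if, C is an [h]-component of H1. -/

import Mathlib

/-- A hypergraph, identified (as in the paper) with its finite set of
finite hyperedges; its nodes are the vertices occurring in some hyperedge. -/
structure HGraph (α : Type*) where
  edges : Finset (Finset α)

namespace HGraph

variable {α : Type*}

/-- The set of nodes of a hypergraph. -/
def nodes (H : HGraph α) : Set α := {x | ∃ h ∈ H.edges, x ∈ h}

/-- `H1 ≤ H2`: every hyperedge of `H1` is contained in some hyperedge of `H2`. -/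
def HLe (H1 H2 : HGraph α) : Prop := ∀ h1 ∈ H1.edges, ∃ h2 ∈ H2.edges, h1 ⊆ h2

/-- `H` is contained in `H'`. -/
def Contained (H H' : HGraph α) : Prop :=
  ∀ h ∈ H.edges, h ∉ H'.edges → ∃ h' ∈ H'.edges, h' ∉ H.edges ∧ h ⊆ h'

/-- `H` is properly contained in `H'`. -/
def ProperlyContained (H H' : HGraph α) : Prop := H.Contained H' ∧ H ≠ H'

/-- A hypergraph is reduced if no hyperedge is a proper subset of another one. -/
def Reduced (H : HGraph α) : Prop := ∀ h ∈ H.edges, ∀ h' ∈ H.edges, ¬ h ⊂ h'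

end HGraph

/-- The type of hyperedges of `H`. -/
abbrev Hyperedge {α : Type*} (H : HGraph α) := {h : Finset α // h ∈ H.edges}

/-- A join tree for a hypergraph `H`: a tree whose vertices are the hyperedges of `H`
such that, for every node `X`, the hyperedges containing `X` induce a connected subtree. -/
structure JoinTree {α : Type*} (H : HGraph α) where
  T : SimpleGraph (Hyperedge H)
  isTree : T.IsTree
  node_connected : ∀ X : α, (T.induce {h : Hyperedge H | X ∈ h.1}).Preconnected

/-- A hypergraph is acyclic iff it has a join tree. -/
def HGraph.Acyclic {α : Type*} (H : HGraph α) : Prop := Nonempty (JoinTree H)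

/-- `Ha` is a tree projection of `H1` w.r.t. `H2`. -/
def IsTreeProjection {α : Type*} (H1 H2 Ha : HGraph α) : Prop :=
  Ha.Acyclic ∧ H1.HLe Ha ∧ Ha.HLe H2

/-- `Ha` is a minimal tree projection of `H1` w.r.t. `H2`. -/
def IsMinimalTreeProjection {α : Type*} (H1 H2 Ha : HGraph α) : Prop :=
  IsTreeProjection H1 H2 Ha ∧
  ∀ Ha' : HGraph α, IsTreeProjection H1 H2 Ha' → ¬ Ha'.ProperlyContained Ha

namespace HGraph

variable {α : Type*}

/-- `X` is `[V]`-adjacent to `Y`: some hyperedge contains both outside of `V`. -/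
def Adj (H : HGraph α) (V : Set α) (X Y : α) : Prop :=
  ∃ h ∈ H.edges, X ∈ h ∧ Y ∈ h ∧ X ∉ V ∧ Y ∉ V

/-- There is a `[V]`-path from `X` to `Y`. -/
def VPath (H : HGraph α) (V : Set α) : α → α → Prop :=
  Relation.ReflTransGen (H.Adj V)

/-- The set `W` is `[V]`-connected. -/
def VConnected (H : HGraph α) (V W : Set α) : Prop :=
  ∀ X ∈ W, ∀ Y ∈ W, H.VPath V X Y

/-- `C` is a `[V]`-component of `H`: a maximal `[V]`-connected nonempty subset
of `nodes(H) \ V`. -/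
def IsComponent (H : HGraph α) (V C : Set α) : Prop :=
  C.Nonempty ∧ C ⊆ H.nodes \ V ∧ H.VConnected V C ∧
  ∀ C' : Set α, C ⊆ C' → C' ⊆ H.nodes \ V → H.VConnected V C' → C' = C

/-- The frontier `Fr(C,H)`: the union of all hyperedges meeting `C`. -/
def Fr (H : HGraph α) (C : Set α) : Set α :=
  {x | ∃ h ∈ H.edges, x ∈ h ∧ ∃ y ∈ C, y ∈ h}

/-- The border `∂(C,H) = Fr(C,H) \ C`. -/
def border (H : HGraph α) (C : Set α) : Set α := H.Fr C \ C

/-- `X` `[V]`-touches the set `W`: `X` is `[∅]`-adjacent to some node `Z` from which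
there is a `[V]`-path to some node of `W`. -/
def Touches (H : HGraph α) (V : Set α) (X : α) (W : Set α) : Prop :=
  ∃ Z : α, H.Adj ∅ X Z ∧ ∃ Y ∈ W, H.VPath V Z Y

end HGraph

namespace JoinTree

variable {α : Type*} {H : HGraph α}

/-- The vertices of the subtree rooted at `h_s` when the join tree is rooted at
(the side of) `h_r`, for adjacent vertices `h_r`, `h_s`. -/
def subtreeVerts (JT : JoinTree H) (h_r h_s : Hyperedge H) : Set (Hyperedge H) :=
  {v | JT.T.dist v h_s < JT.T.dist v h_r}

/-- The nodes occurring in the vertices of the subtree rooted at `h_s` (w.r.t. `h_r`). -/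
def subtreeNodes (JT : JoinTree H) (h_r h_s : Hyperedge H) : Set α :=
  {x | ∃ v ∈ JT.subtreeVerts h_r h_s, x ∈ v.1}

/-- `h_s` is a child of `h_r` in the join tree rooted at `root`. -/
def IsChild (JT : JoinTree H) (root h_r h_s : Hyperedge H) : Prop :=
  JT.T.Adj h_r h_s ∧ JT.T.dist root h_r < JT.T.dist root h_s

end JoinTree

/-- The sub-hypergraph of `H1` induced by the node set `N` is `[∅]`-connected. -/
def InducedConn {α : Type*} (H1 : HGraph α) (N : Set α) : Prop :=
  ∀ X ∈ N, ∀ Y ∈ N,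
    Relation.ReflTransGen
      (fun a b => a ∈ N ∧ b ∈ N ∧ ∃ h ∈ H1.edges, a ∈ h ∧ b ∈ h) X Y

/-- A join tree of `Ha` is `H1`-connected. -/
def JoinTree.IsConnectedFor {α : Type*} {Ha : HGraph α} (JT : JoinTree Ha)
    (H1 : HGraph α) : Prop :=
  ∀ h_r h_s : Hyperedge Ha, JT.T.Adj h_r h_s → InducedConn H1 (JT.subtreeNodes h_r h_s)

/-- `C` is the component `C⊤(h)` associated with vertex `h` of the join tree rooted at
`root`: conventionally `nodes(H1)` for the root, and otherwise the unique
`[h_p]`-component of `H1` (for `h_p` the parent of `h`) determined by the subtree at `h`. -/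
def CtopAt {α : Type*} (H1 : HGraph α) {Ha : HGraph α} (JT : JoinTree Ha)
    (root h : Hyperedge Ha) (C : Set α) : Prop :=
  (h = root ∧ C = H1.nodes) ∨
  ∃ h_p : Hyperedge Ha, JT.IsChild root h_p h ∧ H1.IsComponent (h_p.1 : Set α) C ∧
    JT.subtreeNodes h_p h = C ∪ ((h.1 : Set α) ∩ (h_p.1 : Set α))

/-- The join tree `JT` of `Ha`, rooted at `root`, is an `H1`-component tree. -/
def JoinTree.IsComponentTreeFor {α : Type*} {Ha : HGraph α} (JT : JoinTree Ha)
    (H1 : HGraph α) (root : Hyperedge Ha) : Prop :=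
  (∀ h_r h_s : Hyperedge Ha, JT.IsChild root h_r h_s →
    (∃! C : Set α, H1.IsComponent (h_r.1 : Set α) C ∧
      JT.subtreeNodes h_r h_s = C ∪ ((h_s.1 : Set α) ∩ (h_r.1 : Set α))) ∧
    (∀ C : Set α, H1.IsComponent (h_r.1 : Set α) C →
      JT.subtreeNodes h_r h_s = C ∪ ((h_s.1 : Set α) ∩ (h_r.1 : Set α)) →
      ((h_s.1 : Set α) ∩ C).Nonempty ∧ (h_s.1 : Set α) ⊆ H1.Fr C)) ∧
  (∀ h_r : Hyperedge Ha, ∀ Ctop : Set α, CtopAt H1 JT root h_r Ctop →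
    ∀ C_r : Set α, H1.IsComponent (h_r.1 : Set α) C_r → C_r ⊆ Ctop →
    ∃! h_s : Hyperedge Ha, JT.IsChild root h_r h_s ∧
      JT.subtreeNodes h_r h_s = C_r ∪ ((h_s.1 : Set α) ∩ (h_r.1 : Set α)))

/-! ### The Robber and Captain game -/

/-- A position for the Captain: a set of nodes included in some hyperedge of `H2`. -/
def IsPosition {α : Type*} (H2 : HGraph α) (M : Set α) : Prop :=
  ∃ h2 ∈ H2.edges, M ⊆ (h2 : Set α)

/-- A configuration of the game `R&C(H1,H2)`. -/
def IsConfig {α : Type*} (H1 H2 : HGraph α) (M C : Set α) : Prop :=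
  IsPosition H2 M ∧ (H1.IsComponent M C ∨ C = ∅ ∨ (M = ∅ ∧ C = H1.nodes))

/-- `C_j` is an `[(M_i,C_i),M_j]`-escape component: an `[M_j]`-component of `H1`
such that `C_i ∪ C_j` is `[M_i ∩ M_j]`-connected. -/
def EscapeComp {α : Type*} (H1 : HGraph α) (M_i C_i M_j C_j : Set α) : Prop :=
  H1.IsComponent M_j C_j ∧ H1.VConnected (M_i ∩ M_j) (C_i ∪ C_j)

/-- The escape door `ED((M_i,C),M') = ∂(C,H1) \ M'` (it only depends on `C` and `M'`). -/
def escapeDoor {α : Type*} (H1 : HGraph α) (C M' : Set α) : Set α :=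
  H1.border C \ M'

/-- `σ` is a strategy for the Captain in `R&C(H1,H2)`. -/
def IsStrategy {α : Type*} (H1 H2 : HGraph α) (σ : Set α → Set α → Set α) : Prop :=
  ∀ M C : Set α, IsConfig H1 H2 M C → C ≠ ∅ →
    IsPosition H2 (σ M C) ∧ σ M C ⊆ H1.Fr C

/-- One step of the game played according to `σ`: from configuration `p` the Captain
moves to `σ p.1 p.2`, and the Robber either selects an escape component or is captured. -/
def GameStep {α : Type*} (H1 : HGraph α) (σ : Set α → Set α → Set α)
    (p q : Set α × Set α) : Prop :=
  p.2 ≠ ∅ ∧ q.1 = σ p.1 p.2 ∧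
    (EscapeComp H1 p.1 p.2 q.1 q.2 ∨
      ((∀ C : Set α, ¬ EscapeComp H1 p.1 p.2 q.1 C) ∧ q.2 = ∅))

/-- `p` is a vertex of the game tree `T(σ)` (reachable from the root `(∅, nodes(H1))`). -/
def InGameTree {α : Type*} (H1 : HGraph α) (σ : Set α → Set α → Set α)
    (p : Set α × Set α) : Prop :=
  Relation.ReflTransGen (GameStep H1 σ) (∅, H1.nodes) p

/-- `σ` is winning: the game tree `T(σ)` is finite, i.e., there is no infinite play. -/
def Winning {α : Type*} (H1 : HGraph α) (σ : Set α → Set α → Set α) : Prop :=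
  ¬ ∃ f : ℕ → Set α × Set α, f 0 = (∅, H1.nodes) ∧ ∀ n, GameStep H1 σ (f n) (f (n + 1))

/-- `M_j` is a monotone move in `(M_i, C_i)`. -/
def MonotoneMove {α : Type*} (H1 : HGraph α) (M_i C_i M_j : Set α) : Prop :=
  ∀ C : Set α, EscapeComp H1 M_i C_i M_j C → C ⊆ C_i

/-- `σ` is a monotone strategy. -/
def MonotoneStrategy {α : Type*} (H1 : HGraph α) (σ : Set α → Set α → Set α) : Prop :=
  ∀ p q : Set α × Set α, InGameTree H1 σ p → GameStep H1 σ p q →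
    MonotoneMove H1 p.1 p.2 q.1

/-!
Fix a hyperedge `h` of a tree projection `Ha`. Root a join tree of `Ha` at `h` and replace it
by one copy for every `[h]`-component `C` of `H1`, the copy of a vertex `e` being labelled
`e ∩ (C ∪ h)`, and hang all copies of the root from a new root labelled `h`. These labels still
have the running intersection property, so contracting tree edges with comparable labels yields
a reduced acyclic hypergraph `Ha'` with `H1 ≤ Ha' ≤ Ha ≤ H2`, which is contained in `Ha`. If
`Ha` is minimal then `Ha' = Ha`: outside `h`, every hyperedge of `Ha` lies in a single
`[h]`-component of `H1`. Hence `Ha` and `H1` have the same nodes outside `h` and the same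
`[h]`-paths, so they have the same `[h]`-components.
-/

open Relation

section RunningIntersection

variable {ι α : Type*}

def RunningIntersection (adj : ι → ι → Prop) (π : ι → Finset α) : Prop :=
  ∀ x a b, x ∈ π a → x ∈ π b →
    ReflTransGen (fun c d => x ∈ π c ∧ x ∈ π d ∧ adj c d) a b

lemma SimpleGraph.induce_reachable_iff {G : SimpleGraph ι} {s : Set ι} {a b : s} :
    (G.induce s).Reachable a b ↔
      ReflTransGen (fun c d => c ∈ s ∧ d ∈ s ∧ G.Adj c d) a b := by
  rw [reachable_iff_reflTransGen]
  refine ⟨ReflTransGen.lift Subtype.val (fun c d h => ⟨c.2, d.2, h⟩) _ _, fun h => ?_⟩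
  suffices ∀ c (hc : c ∈ s), ReflTransGen (fun c d => c ∈ s ∧ d ∈ s ∧ G.Adj c d) a c →
      ReflTransGen (G.induce s).Adj a ⟨c, hc⟩ from this b b.2 h
  intro c hc hac
  induction hac with
  | refl => rfl
  | tail _ hcd ih => exact (ih hcd.1).tail hcd.2.2

lemma runningIntersection_iff_preconnected (G : SimpleGraph ι) (π : ι → Finset α) :
    RunningIntersection G.Adj π ↔ ∀ x, (G.induce {i | x ∈ π i}).Preconnected := by
  simp only [SimpleGraph.Preconnected, SimpleGraph.induce_reachable_iff]
  exact ⟨fun h x a b => h x a b a.2 b.2, fun h x a b ha hb => h x ⟨a, ha⟩ ⟨b, hb⟩⟩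

end RunningIntersection

lemma SimpleGraph.IsAcyclic.support_subset_of_induce_preconnected {V : Type*}
    {G : SimpleGraph V} (hG : G.IsAcyclic) {s : Set V} (hs : (G.induce s).Preconnected)
    {a b : V} (ha : a ∈ s) (hb : b ∈ s) {p : G.Walk a b} (hp : p.IsPath) :
    ∀ v ∈ p.support, v ∈ s := by
  classical
  obtain ⟨w⟩ := hs ⟨a, ha⟩ ⟨b, hb⟩
  let w' : G.Walk a b := w.map (Embedding.induce s).toHom
  have hpw : p = w'.bypass :=
    congrArg Subtype.val ((hG.subsingleton_path a b).elim ⟨p, hp⟩ ⟨_, w'.bypass_isPath⟩)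
  intro v hv
  have hv' : v ∈ w.support.map _ :=
    Walk.support_map _ w ▸ w'.support_bypass_subset_support (hpw ▸ hv)
  obtain ⟨u, -, rfl⟩ := List.mem_map.mp hv'
  exact u.2

/-- A rooted tree given by its parent map; `depth` certifies that iterating `parent` reaches
`root`. -/
structure ParentTree (ι : Type*) where
  root : ι
  parent : ι → ι
  depth : ι → ℕ
  parent_root : parent root = root
  depth_parent_lt : ∀ v, v ≠ root → depth (parent v) < depth v

namespace ParentTree

variable {ι : Type*} (P : ParentTree ι)

def Adj (a b : ι) : Prop := a ≠ b ∧ (P.parent a = b ∨ P.parent b = a)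

lemma Adj.symm {P : ParentTree ι} {a b : ι} (h : P.Adj a b) : P.Adj b a :=
  ⟨h.1.symm, h.2.symm⟩

def graph : SimpleGraph ι where
  Adj := P.Adj
  symm := ⟨fun _ _ => Adj.symm⟩
  loopless := ⟨fun _ h => h.1 rfl⟩

lemma parent_ne_self {v : ι} (hv : v ≠ P.root) : P.parent v ≠ v :=
  fun h => (P.depth_parent_lt v hv).ne (congrArg P.depth h)

lemma adj_parent {v : ι} (hv : v ≠ P.root) : P.Adj v (P.parent v) :=
  ⟨(P.parent_ne_self hv).symm, Or.inl rfl⟩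

lemma parent_eq_of_adj {a b : ι} (h : P.Adj a b) (hd : P.depth b ≤ P.depth a) :
    P.parent a = b := by
  refine h.2.resolve_right fun hb => ?_
  have hbr : b ≠ P.root := by
    rintro rfl
    exact h.1 (hb.symm.trans P.parent_root)
  exact absurd (hb ▸ P.depth_parent_lt b hbr) hd.not_gt

lemma reachable_root (v : ι) : P.graph.Reachable v P.root := by
  induction h : P.depth v using Nat.strong_induction_on generalizing v with
  | _ n ih =>
  by_cases hv : v = P.root
  · rw [hv]
  · exact SimpleGraph.Adj.reachable (G := P.graph) (P.adj_parent hv) |>.trans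
      (ih _ (h ▸ P.depth_parent_lt v hv) _ rfl)

/-- On a cycle rotated to start at a vertex of maximal depth, the second and the penultimate
vertex would both be the parent of that vertex. -/
lemma graph_isAcyclic : P.graph.IsAcyclic := by
  classical
  intro v c hc
  obtain ⟨m, hm, hmax⟩ := c.support.toFinset.exists_max_image P.depth ⟨v, by simp⟩
  rw [List.mem_toFinset] at hm
  have hc' := hc.rotate hm
  have hdepth : ∀ u ∈ (c.rotate m hm).support, P.depth u ≤ P.depth m := fun u hu =>
    hmax u (List.mem_toFinset.mpr ((c.mem_support_rotate_iff m hm).mp hu))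
  have hnil : ¬ (c.rotate m hm).Nil := hc'.not_nil
  apply hc'.snd_ne_penultimate
  rw [← P.parent_eq_of_adj ((c.rotate m hm).adj_snd hnil) (hdepth _ (by simp)),
    ← P.parent_eq_of_adj ((c.rotate m hm).adj_penultimate hnil).symm (hdepth _ (by simp))]

lemma graph_isTree : P.graph.IsTree := by
  have : Nonempty ι := ⟨P.root⟩
  exact ⟨⟨fun u v => (P.reachable_root u).trans (P.reachable_root v).symm⟩,
    P.graph_isAcyclic⟩

end ParentTree

/-- The parent of `v` is the penultimate vertex of a shortest path from `r` to `v`. -/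
lemma SimpleGraph.IsTree.exists_parentTree {V : Type*} {T : SimpleGraph V} (hT : T.IsTree)
    (r : V) : ∃ P : ParentTree V, P.root = r ∧ P.graph = T := by
  classical
  choose q hq hlen using fun v => hT.connected.exists_path_of_dist r v
  have hnil : ∀ v, v ≠ r → ¬ (q v).Nil := fun v hv => Walk.not_nil_of_ne (Ne.symm hv)
  have hparent : ∀ {a b}, T.Adj a b → T.dist r b = T.dist r a + 1 →
      (q b).penultimate = a := by
    intro a b hab hd
    by_cases ha : a ∈ (q b).support
    · exact (hT.isAcyclic.eq_penultimate_of_adj_end (hq b) hab.symm ha).symm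
    · have hb := hT.isAcyclic.mem_support_of_ne_mem_support_of_adj_of_isPath (hq a) (hq b) hab ha
      have := (dist_le ((q a).takeUntil b hb)).trans ((q a).length_takeUntil_le_length hb)
      have := hlen a
      omega
  refine ⟨⟨r, fun v => (q v).penultimate, T.dist r, ?_, fun v hv => ?_⟩, rfl, ?_⟩
  · simp [Walk.penultimate, hlen]
  · have := dist_le (q v).dropLast
    have := (q v).length_dropLast_add_one (hnil v hv)
    have := hlen v
    omega
  · ext a b
    refine ⟨?_, fun hab => ⟨hab.ne, ?_⟩⟩
    · rintro ⟨hne, rfl | rfl⟩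
      · have har : a ≠ r := fun h => hne (by simp [h, Walk.penultimate, hlen])
        exact ((q a).adj_penultimate (hnil a har)).symm
      · have hbr : b ≠ r := fun h => hne (by simp [h, Walk.penultimate, hlen])
        exact (q b).adj_penultimate (hnil b hbr)
    · rcases hT.dist_eq_dist_add_one_of_adj r hab with h | h
      · exact Or.inl (hparent hab.symm h)
      · exact Or.inr (hparent hab h)

namespace ParentTree

variable {ι α : Type*} (P : ParentTree ι)

/-- The witness is the neighbour of `i` on the path to `j`. -/
lemma exists_adj_label_subset {π : ι → Finset α} (hπ : RunningIntersection P.Adj π)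
    {i j : ι} (hij : i ≠ j) (hsub : π i ⊆ π j) : ∃ n, P.Adj i n ∧ π i ⊆ π n := by
  obtain ⟨q, hq⟩ := P.graph_isTree.connected.exists_isPath i j
  refine ⟨q.snd, q.adj_snd (SimpleGraph.Walk.not_nil_of_ne hij), fun x hx => ?_⟩
  exact P.graph_isAcyclic.support_subset_of_induce_preconnected
    ((runningIntersection_iff_preconnected P.graph π).mp hπ x) hx (hsub hx) hq _
    (q.getVert_mem_support 1)

open Classical in
/-- Contraction of the edge between `c` and its parent, which adopts the children of `c`. -/
noncomputable def contract (c : ι) (hc : c ≠ P.root) : ParentTree {v // v ≠ c} where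
  root := ⟨P.root, hc.symm⟩
  parent v :=
    if h : P.parent v = c then ⟨P.parent c, P.parent_ne_self hc⟩ else ⟨P.parent v, h⟩
  depth v := P.depth v
  parent_root := by simp [P.parent_root, Ne.symm hc]
  depth_parent_lt v hv := by
    have hv' : v.1 ≠ P.root := fun h => hv (Subtype.ext h)
    split_ifs with h
    · have := P.depth_parent_lt v hv'
      rw [h] at this
      exact (P.depth_parent_lt c hc).trans this
    · exact P.depth_parent_lt v hv'

open Classical in
noncomputable def contractLabel (π : ι → Finset α) (c : ι) (v : {v // v ≠ c}) : Finset α :=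
  if v.1 = P.parent c then π v ∪ π c else π v

open Classical in
noncomputable def contractMap (c : ι) (hc : c ≠ P.root) (u : ι) : {v // v ≠ c} :=
  if h : u = c then ⟨P.parent c, P.parent_ne_self hc⟩ else ⟨u, h⟩

lemma contractMap_of_ne {c : ι} (hc : c ≠ P.root) {u : ι} (hu : u ≠ c) :
    P.contractMap c hc u = ⟨u, hu⟩ := dif_neg hu

lemma contractMap_self {c : ι} (hc : c ≠ P.root) :
    P.contractMap c hc c = ⟨P.parent c, P.parent_ne_self hc⟩ := dif_pos rfl

lemma subset_contractLabel_contractMap (π : ι → Finset α) {c : ι} (hc : c ≠ P.root)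
    (u : ι) : π u ⊆ P.contractLabel π c (P.contractMap c hc u) := by
  by_cases hu : u = c
  · subst hu
    simp [contractMap_self, contractLabel]
  · rw [contractMap_of_ne P hc hu, contractLabel]
    split_ifs <;> simp

lemma contractMap_adj {c : ι} (hc : c ≠ P.root) {u w : ι} (hne : u ≠ w)
    (hu : P.parent u = w) : P.contractMap c hc u = P.contractMap c hc w ∨
      (P.contract c hc).Adj (P.contractMap c hc u) (P.contractMap c hc w) := by
  by_cases huc : u = c
  · subst huc
    left
    rw [contractMap_self, contractMap_of_ne P hc (hu ▸ P.parent_ne_self hc)]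
    simp [hu]
  right
  rw [contractMap_of_ne P hc huc]
  by_cases hwc : w = c
  · subst hwc
    rw [contractMap_self]
    refine ⟨fun h => ?_, Or.inl (by simp [contract, hu])⟩
    have hur : u ≠ P.root := fun h => hne (by rw [← hu, h, P.parent_root])
    have h1 := P.depth_parent_lt u hur
    have h2 := P.depth_parent_lt w hc
    rw [hu] at h1
    have hu' : u = P.parent w := congrArg Subtype.val h
    rw [← hu'] at h2
    omega
  · rw [contractMap_of_ne P hc hwc]
    exact ⟨fun h => hne (congrArg Subtype.val h), Or.inl (by simp [contract, hu, hwc])⟩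

lemma runningIntersection_contract {π : ι → Finset α} (hπ : RunningIntersection P.Adj π)
    {c : ι} (hc : c ≠ P.root) :
    RunningIntersection (P.contract c hc).Adj (P.contractLabel π c) := by
  classical
  have hpre : ∀ {x} (a : {v // v ≠ c}), x ∈ P.contractLabel π c a →
      ∃ u, P.contractMap c hc u = a ∧ x ∈ π u := by
    intro x a hx
    by_cases ha : a.1 = P.parent c ∧ x ∉ π a
    · refine ⟨c, ?_, ?_⟩
      · rw [contractMap_self]
        exact Subtype.ext ha.1.symm
      · rw [contractLabel, if_pos ha.1, Finset.mem_union] at hx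
        exact hx.resolve_left ha.2
    · refine ⟨a, contractMap_of_ne P hc a.2, ?_⟩
      by_contra hxa
      exact ha ⟨by by_contra h; simp [contractLabel, h, hxa] at hx, hxa⟩
  intro x a b ha hb
  obtain ⟨a₀, rfl, ha₀⟩ := hpre a ha
  obtain ⟨b₀, rfl, hb₀⟩ := hpre b hb
  refine ReflTransGen.lift' (P.contractMap c hc) (fun u w ⟨hu, hw, hne, huw⟩ => ?_) _ _
    (hπ x a₀ b₀ ha₀ hb₀)
  change ReflTransGen _ (P.contractMap c hc u) (P.contractMap c hc w)
  have hstep := huw.elim (P.contractMap_adj hc hne)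
    (fun h => (P.contractMap_adj hc hne.symm h).imp Eq.symm Adj.symm)
  rcases hstep with heq | hadj
  · rw [heq]
  · exact .single ⟨P.subset_contractLabel_contractMap π hc u hu,
      P.subset_contractLabel_contractMap π hc w hw, hadj⟩

lemma exists_contractLabel_eq {π : ι → Finset α} {c : ι}
    (hc : π c ⊆ π (P.parent c) ∨ π (P.parent c) ⊆ π c) (v : {v // v ≠ c}) :
    ∃ u, π u = P.contractLabel π c v := by
  classical
  unfold contractLabel
  split_ifs with hv
  · rw [hv]
    rcases hc with h | h
    · exact ⟨P.parent c, (Finset.union_eq_left.mpr h).symm⟩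
    · exact ⟨c, (Finset.union_eq_right.mpr h).symm⟩
  · exact ⟨v, rfl⟩

lemma acyclic_image [Fintype ι] [DecidableEq α] {π : ι → Finset α}
    (hπ : RunningIntersection P.Adj π) (hinj : Function.Injective π) :
    (HGraph.mk (Finset.univ.image π)).Acyclic := by
  let e : ι ≃ Hyperedge (HGraph.mk (Finset.univ.image π)) :=
    Equiv.ofBijective (fun i => ⟨π i, Finset.mem_image_of_mem π (Finset.mem_univ i)⟩)
      ⟨fun a b h => hinj (congrArg Subtype.val h), fun g => by
        obtain ⟨i, -, hi⟩ := Finset.mem_image.mp g.2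
        exact ⟨i, Subtype.ext hi⟩⟩
  refine ⟨⟨P.graph.map e.toEmbedding, (SimpleGraph.Iso.map e P.graph).isTree_iff.mp
    P.graph_isTree, (runningIntersection_iff_preconnected _ Subtype.val).mp ?_⟩⟩
  have hval : ∀ g, π (e.symm g) = g.1 := fun g => congrArg Subtype.val (e.apply_symm_apply g)
  intro x a b ha hb
  rw [← e.apply_symm_apply a, ← e.apply_symm_apply b]
  exact ReflTransGen.lift e (fun u w h => ⟨h.1, h.2.1, SimpleGraph.map_adj_apply.mpr h.2.2⟩) _ _
    (hπ x _ _ (hval a ▸ ha) (hval b ▸ hb))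

/-- Contracting edges whose labels are comparable until the labelling is an antichain. -/
theorem exists_reduced_acyclic [Finite ι] {π : ι → Finset α}
    (hπ : RunningIntersection P.Adj π) :
    ∃ H : HGraph α, H.Acyclic ∧ H.Reduced ∧ (∀ g ∈ H.edges, ∃ i, π i = g) ∧
      ∀ i, ∃ g ∈ H.edges, π i ⊆ g := by
  classical
  induction hn : Nat.card ι using Nat.strong_induction_on generalizing ι with
  | _ n ih =>
  by_cases hsub : ∃ i j, i ≠ j ∧ π i ⊆ π j
  · obtain ⟨i, j, hij, hsub⟩ := hsub
    obtain ⟨c, hc, hcomp⟩ :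
        ∃ c, c ≠ P.root ∧ (π c ⊆ π (P.parent c) ∨ π (P.parent c) ⊆ π c) := by
      obtain ⟨k, ⟨hik, hpar | hpar⟩, hk⟩ := P.exists_adj_label_subset hπ hij hsub
      · exact ⟨i, fun h => hik (by rw [← hpar, h, P.parent_root]), Or.inl (hpar ▸ hk)⟩
      · exact ⟨k, fun h => hik (by rw [← hpar, h, P.parent_root]), Or.inr (hpar ▸ hk)⟩
    obtain ⟨H, hac, hred, hrange, hcover⟩ :=
      ih _ (hn ▸ Finite.card_subtype_lt (x := c) (by simp)) (P.contract c hc)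
        (P.runningIntersection_contract hπ hc) rfl
    refine ⟨H, hac, hred, fun g hg => ?_, fun u => ?_⟩
    · obtain ⟨v, rfl⟩ := hrange g hg
      exact P.exists_contractLabel_eq hcomp v
    · obtain ⟨g, hg, hvg⟩ := hcover (P.contractMap c hc u)
      exact ⟨g, hg, (P.subset_contractLabel_contractMap π hc u).trans hvg⟩
  · push Not at hsub
    have := Fintype.ofFinite ι
    refine ⟨⟨Finset.univ.image π⟩, P.acyclic_image hπ fun i j h => ?_, ?_, ?_, ?_⟩
    · by_contra hij
      exact hsub i j hij h.le
    · simp only [HGraph.Reduced, Finset.mem_image, Finset.mem_univ, true_and]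
      rintro _ ⟨i, rfl⟩ _ ⟨j, rfl⟩ hij
      exact hsub i j (fun h => hij.ne (h ▸ rfl)) hij.subset
    · simp
    · exact fun i => ⟨π i, by simp, subset_rfl⟩

open Classical in
/-- One copy of `P` for every `k : K`, the copies of the root being attached to a new root. -/
noncomputable def fan (K : Type*) : ParentTree (Option (ι × K)) where
  root := none
  parent
    | none => none
    | some (v, k) => if v = P.root then none else some (P.parent v, k)
  depth
    | none => 0
    | some (v, _) => P.depth v + 1
  parent_root := rfl
  depth_parent_lt
    | none, h => (h rfl).elim
    | some (v, k), _ => by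
      dsimp only
      split_ifs with hv
      · exact Nat.succ_pos _
      · simpa using P.depth_parent_lt v hv

open Classical in
noncomputable def fanLabel (π : ι → Finset α) {K : Type*} (S : K → Set α) :
    Option (ι × K) → Finset α
  | none => π P.root
  | some (v, k) => (π v).filter (· ∈ S k)

variable {K : Type*}

lemma adj_fan_some {k : K} {u w : ι} (h : P.Adj u w) :
    (P.fan K).Adj (some (u, k)) (some (w, k)) := by
  have hroot : ∀ {a b}, P.parent a = b → a ≠ b → a ≠ P.root := fun hab hne ha =>
    hne (by rw [← hab, ha, P.parent_root])
  refine ⟨fun h' => h.1 (congrArg (·.1) (Option.some.inj h')),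
    h.2.imp (fun h' => ?_) fun h' => ?_⟩
  · simp [fan, hroot h' h.1, h']
  · simp [fan, hroot h' h.1.symm, h']

lemma adj_fan_root {k : K} : (P.fan K).Adj (some (P.root, k)) none :=
  ⟨Option.some_ne_none _, Or.inl (by simp [fan])⟩

lemma runningIntersection_fan {π : ι → Finset α} (hπ : RunningIntersection P.Adj π)
    {S : K → Set α} (hdisj : ∀ k l, k ≠ l → S k ∩ S l ⊆ ↑(π P.root)) :
    RunningIntersection (P.fan K).Adj (P.fanLabel π S) := by
  classical
  have mem_some {x v k} : x ∈ P.fanLabel π S (some (v, k)) ↔ x ∈ π v ∧ x ∈ S k := by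
    simp [fanLabel]
  intro x
  let R := fun c d => x ∈ P.fanLabel π S c ∧ x ∈ P.fanLabel π S d ∧ (P.fan K).Adj c d
  have : Std.Symm R := ⟨fun _ _ h => ⟨h.2.1, h.1, h.2.2.symm⟩⟩
  have copy {k u w} (hk : x ∈ S k) (hu : x ∈ π u) (hw : x ∈ π w) :
      ReflTransGen R (some (u, k)) (some (w, k)) :=
    ReflTransGen.lift (fun v => some (v, k))
      (fun _ _ ⟨hu', hw', hadj⟩ => ⟨mem_some.2 ⟨hu', hk⟩, mem_some.2 ⟨hw', hk⟩,
        P.adj_fan_some hadj⟩) _ _ (hπ x _ _ hu hw)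
  have to_root : x ∈ π P.root → ∀ a, x ∈ P.fanLabel π S a → ReflTransGen R a none := by
    rintro hx (_ | ⟨v, k⟩) ha
    · rfl
    · obtain ⟨hv, hk⟩ := mem_some.1 ha
      exact (copy hk hv hx).tail ⟨mem_some.2 ⟨hx, hk⟩, hx, P.adj_fan_root⟩
  intro a b ha hb
  by_cases hx : x ∈ π P.root
  · exact (to_root hx a ha).trans (Std.Symm.symm _ _ (to_root hx b hb))
  rcases a with _ | ⟨v, k⟩
  · exact absurd ha hx
  rcases b with _ | ⟨w, l⟩
  · exact absurd hb hx
  obtain ⟨hv, hk⟩ := mem_some.1 ha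
  obtain ⟨hw, hl⟩ := mem_some.1 hb
  obtain rfl : k = l := by
    by_contra hkl
    exact hx (hdisj k l hkl ⟨hk, hl⟩)
  exact copy hk hv hw

end ParentTree

namespace HGraph

variable {α : Type*} {H H' H'' : HGraph α} {V C D : Set α} {x y : α}

lemma HLe.trans (h : H.HLe H') (h' : H'.HLe H'') : H.HLe H'' := fun e he =>
  let ⟨e', he', hee'⟩ := h e he
  let ⟨e'', he'', he'e''⟩ := h' e' he'
  ⟨e'', he'', hee'.trans he'e''⟩

lemma nodes_subset_of_hLe (h : H.HLe H') : H.nodes ⊆ H'.nodes := fun _ ⟨e, he, hx⟩ =>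
  let ⟨e', he', hee'⟩ := h e he
  ⟨e', he', hee' hx⟩

lemma nodes_finite (H : HGraph α) : H.nodes.Finite := by
  have : H.nodes = ⋃ e ∈ H.edges, (e : Set α) := by ext; simp [nodes]
  rw [this]
  exact H.edges.finite_toSet.biUnion fun e _ => e.finite_toSet

lemma Reduced.contained_of_hLe (hred : H.Reduced) (hle : H.HLe H') : H.Contained H' := by
  intro g hg hg'
  obtain ⟨e, he, hge⟩ := hle g hg
  refine ⟨e, he, fun he' => hg' ?_, hge⟩
  by_contra hne
  exact hred g hg e he' (hge.ssubset_of_ne fun h => hne (h ▸ he))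

lemma Adj.symm (h : H.Adj V x y) : H.Adj V y x :=
  let ⟨e, he, hx, hy, hxV, hyV⟩ := h
  ⟨e, he, hy, hx, hyV, hxV⟩

lemma Adj.hLe (h : H.Adj V x y) (hle : H.HLe H') : H'.Adj V x y :=
  let ⟨e, he, hx, hy, hxV, hyV⟩ := h
  let ⟨e', he', hee'⟩ := hle e he
  ⟨e', he', hee' hx, hee' hy, hxV, hyV⟩

lemma VPath.symm (h : H.VPath V x y) : H.VPath V y x := by
  induction h with
  | refl => exact .refl
  | tail _ hyz ih => exact ReflTransGen.head hyz.symm ih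

lemma VPath.hLe (h : H.VPath V x y) (hle : H.HLe H') : H'.VPath V x y :=
  ReflTransGen.mono (fun _ _ hab => hab.hLe hle) _ _ h

lemma VPath.mem_nodes_diff (h : H.VPath V x y) (hx : x ∈ H.nodes \ V) : y ∈ H.nodes \ V := by
  induction h with
  | refl => exact hx
  | tail _ hyz => obtain ⟨e, he, -, hz, -, hzV⟩ := hyz; exact ⟨⟨e, he, hz⟩, hzV⟩

lemma IsComponent.subset (hC : H.IsComponent V C) : C ⊆ H.nodes \ V := hC.2.1

lemma IsComponent.vPath (hC : H.IsComponent V C) (hx : x ∈ C) (hy : y ∈ C) : H.VPath V x y :=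
  hC.2.2.1 x hx y hy

lemma IsComponent.mem_of_vPath (hC : H.IsComponent V C) (hx : x ∈ C) (hxy : H.VPath V x y) :
    y ∈ C := by
  have hconn : H.VConnected V (insert y C) := by
    have hx' : ∀ z ∈ insert y C, H.VPath V x z := by
      rintro z (rfl | hz)
      exacts [hxy, hC.vPath hx hz]
    exact fun z hz w hw => (hx' z hz).symm.trans (hx' w hw)
  have := hC.2.2.2 _ (Set.subset_insert y C)
    (Set.insert_subset (hxy.mem_nodes_diff (hC.subset hx)) hC.subset) hconn
  exact this ▸ Set.mem_insert y C

lemma IsComponent.eq_of_mem (hC : H.IsComponent V C) (hD : H.IsComponent V D) (hxC : x ∈ C)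
    (hxD : x ∈ D) : C = D :=
  Set.Subset.antisymm (fun _ hy => hD.mem_of_vPath hxD (hC.vPath hxC hy))
    (fun _ hy => hC.mem_of_vPath hxC (hD.vPath hxD hy))

lemma exists_isComponent_mem (hx : x ∈ H.nodes \ V) : ∃ C, H.IsComponent V C ∧ x ∈ C := by
  refine ⟨{y | H.VPath V x y}, ⟨⟨x, .refl⟩, fun _ hy => hy.mem_nodes_diff hx,
    fun y hy z hz => hy.symm.trans hz, fun C' hC' _ hconn => ?_⟩, .refl⟩
  exact Set.Subset.antisymm (fun y hy => hconn x (hC' .refl) y hy) hC'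

lemma exists_isComponent_subset_union {e : Finset α} (he : e ∈ H.edges) (hV : ¬ ↑e ⊆ V) :
    ∃ C, H.IsComponent V C ∧ ↑e ⊆ C ∪ V := by
  obtain ⟨w, hw, hwV⟩ := Set.not_subset.mp hV
  obtain ⟨C, hC, hwC⟩ := H.exists_isComponent_mem ⟨⟨e, he, hw⟩, hwV⟩
  refine ⟨C, hC, fun y hy => or_iff_not_imp_right.mpr fun hyV => ?_⟩
  exact hC.mem_of_vPath hwC (.single ⟨e, he, hw, hy, hwV, hyV⟩)

lemma finite_setOf_isComponent (H : HGraph α) (V : Set α) : {C | H.IsComponent V C}.Finite :=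
  H.nodes_finite.finite_subsets.subset fun _ hC => hC.subset.trans Set.sdiff_subset

lemma isComponent_congr (hn : H.nodes \ V = H'.nodes \ V)
    (hp : ∀ x y, H.VPath V x y ↔ H'.VPath V x y) :
    H.IsComponent V C ↔ H'.IsComponent V C := by
  simp only [IsComponent, VConnected, hn, hp]

theorem isComponent_iff_of_hLe (hle : H.HLe H')
    (hconn : ∀ e ∈ H'.edges, ↑e \ V ⊆ H.nodes ∧ H.VConnected V (↑e \ V)) :
    H'.IsComponent V C ↔ H.IsComponent V C := by
  refine isComponent_congr ?_ fun x y => ⟨fun h => ?_, (·.hLe hle)⟩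
  · refine Set.Subset.antisymm (fun x ⟨⟨e, he, hx⟩, hxV⟩ => ?_)
      (Set.sdiff_subset_sdiff_left (nodes_subset_of_hLe hle))
    exact ⟨(hconn e he).1 ⟨hx, hxV⟩, hxV⟩
  · refine ReflTransGen.lift' id (fun a b ⟨e, he, ha, hb, haV, hbV⟩ => ?_) _ _ h
    exact (hconn e he).2 a ⟨ha, haV⟩ b ⟨hb, hbV⟩

end HGraph

section TreeProjection

variable {α : Type*} {H1 H2 Ha : HGraph α} {h : Finset α}

theorem HGraph.Acyclic.exists_split_along_components (hac : Ha.Acyclic) (hh : h ∈ Ha.edges)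
    (H1 : HGraph α) :
    ∃ Ha' : HGraph α, Ha'.Acyclic ∧ Ha'.Reduced ∧
      (∀ g ∈ Ha'.edges, g = h ∨
        ∃ e ∈ Ha.edges, ∃ C, H1.IsComponent ↑h C ∧ (g : Set α) = ↑e ∩ (C ∪ ↑h)) ∧
      (∃ g ∈ Ha'.edges, h ⊆ g) ∧
      ∀ e ∈ Ha.edges, ∀ C, H1.IsComponent ↑h C →
        ∃ g ∈ Ha'.edges, ↑e ∩ (C ∪ ↑h) ⊆ (g : Set α) := by
  classical
  obtain ⟨JT⟩ := hac
  obtain ⟨P, hroot, hgraph⟩ := JT.isTree.exists_parentTree ⟨h, hh⟩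
  have hπ : RunningIntersection P.Adj (Subtype.val : Hyperedge Ha → Finset α) := by
    have := (runningIntersection_iff_preconnected JT.T Subtype.val).mpr JT.node_connected
    rwa [← hgraph] at this
  let K := {C : Set α // H1.IsComponent ↑h C}
  have : Finite K := (H1.finite_setOf_isComponent ↑h).to_subtype
  let S : K → Set α := fun C => C.1 ∪ ↑h
  have hdisj : ∀ C D : K, C ≠ D → S C ∩ S D ⊆ ↑(P.root.1) := by
    rintro ⟨C, hC⟩ ⟨D, hD⟩ hCD x ⟨hxC | hxh, hxD | hxh⟩
    · exact absurd (Subtype.ext (hC.eq_of_mem hD hxC hxD)) hCD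
    all_goals simpa [hroot] using hxh
  obtain ⟨Ha', hac', hred, hrange, hcover⟩ :=
    (P.fan K).exists_reduced_acyclic (P.runningIntersection_fan hπ hdisj)
  have hL_none : P.fanLabel Subtype.val S none = h := by simp [ParentTree.fanLabel, hroot]
  have hL_some : ∀ e C, (P.fanLabel Subtype.val S (some (e, C)) : Set α) = ↑e.1 ∩ S C := by
    intro e C
    ext
    simp [ParentTree.fanLabel]
  refine ⟨Ha', hac', hred, fun g hg => ?_, ?_, fun e he C hC => ?_⟩
  · obtain ⟨(_ | ⟨e, C⟩), rfl⟩ := hrange g hg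
    exacts [Or.inl hL_none, Or.inr ⟨e.1, e.2, C.1, C.2, hL_some e C⟩]
  · obtain ⟨g, hg, hsub⟩ := hcover none
    exact ⟨g, hg, hL_none ▸ hsub⟩
  · obtain ⟨g, hg, hsub⟩ := hcover (some (⟨e, he⟩, ⟨C, hC⟩))
    exact ⟨g, hg, hL_some ⟨e, he⟩ ⟨C, hC⟩ ▸ Finset.coe_subset.mpr hsub⟩

theorem IsTreeProjection.exists_contained_vConnected_diff (hTP : IsTreeProjection H1 H2 Ha)
    (hh : h ∈ Ha.edges) :
    ∃ Ha', IsTreeProjection H1 H2 Ha' ∧ Ha'.Contained Ha ∧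
      ∀ g ∈ Ha'.edges, ↑g \ ↑h ⊆ H1.nodes ∧ H1.VConnected ↑h (↑g \ ↑h) := by
  obtain ⟨hac, hle1, hle2⟩ := hTP
  obtain ⟨Ha', hac', hred, hedges, ⟨g₀, hg₀, hhg₀⟩, hcover⟩ :=
    hac.exists_split_along_components hh H1
  have hle : Ha'.HLe Ha := by
    intro g hg
    rcases hedges g hg with rfl | ⟨e, he, C, -, hge⟩
    · exact ⟨g, hh, subset_rfl⟩
    · exact ⟨e, he, Finset.coe_subset.mp (hge ▸ Set.inter_subset_left)⟩
  have hle1' : H1.HLe Ha' := by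
    intro e1 he1
    obtain ⟨e, he, he1e⟩ := hle1 e1 he1
    by_cases hV : (e1 : Set α) ⊆ h
    · exact ⟨g₀, hg₀, (Finset.coe_subset.mp hV).trans hhg₀⟩
    · obtain ⟨C, hC, hsub⟩ := H1.exists_isComponent_subset_union he1 hV
      obtain ⟨g, hg, hsubg⟩ := hcover e he C hC
      exact ⟨g, hg, fun y hy => hsubg ⟨he1e hy, hsub hy⟩⟩
  refine ⟨Ha', ⟨hac', hle1', hle.trans hle2⟩, hred.contained_of_hLe hle, fun g hg => ?_⟩
  rcases hedges g hg with rfl | ⟨e, he, C, hC, hge⟩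
  · simp [HGraph.VConnected]
  · have hsub : ↑g \ ↑h ⊆ C := by
      rw [hge]
      exact fun y ⟨⟨_, hy⟩, hyh⟩ => hy.resolve_right hyh
    exact ⟨hsub.trans fun y hy => (hC.subset hy).1,
      fun x hx y hy => hC.vPath (hsub hx) (hsub hy)⟩

theorem IsMinimalTreeProjection.vConnected_diff (hmin : IsMinimalTreeProjection H1 H2 Ha)
    (hh : h ∈ Ha.edges) :
    ∀ e ∈ Ha.edges, ↑e \ ↑h ⊆ H1.nodes ∧ H1.VConnected ↑h (↑e \ ↑h) := by
  obtain ⟨Ha', hTP, hcont, hconn⟩ := hmin.1.exists_contained_vConnected_diff hh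
  obtain rfl : Ha' = Ha := by
    by_contra hne
    exact hmin.2 Ha' hTP ⟨hcont, hne⟩
  exact hconn

end TreeProjection

theorem minimal_tp_components_preserved {α : Type*} (H1 H2 Ha : HGraph α)
    (hmin : IsMinimalTreeProjection H1 H2 Ha) :
    ∀ h ∈ Ha.edges, ∀ C : Set α,
      Ha.IsComponent (h : Set α) C ↔ H1.IsComponent (h : Set α) C := fun _ hh _ =>
  HGraph.isComponent_iff_of_hLe hmin.1.2.1 (hmin.vConnected_diff hh)
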